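/- arXiv:2301.00475 — 3 statements merged into one kernel-verified Lean document; each statement's English description precedes it below -/
import Mathlib

section
/- Under (A2.1)–(A2.3), the set C is nonempty and compact, C = cl(int C), C is epi-Lipschitz (at every x ∈ C, after applying an orthogonal matrix, C coincides near x with the epigraph of a Lipschitz continuous function), and C is (η/M_ψ)-prox-regular; in particular, every y ∈ ℝⁿ with d(y, C) < η/M_ψ has a unique nearest point in C. -/
open MeasureTheory Filter Set Metric Topology
open scoped RealInnerProductSpace

noncomputable section

/-- The proximal normal cone to `S` at `x`. -/
def proxNC {H : Type*} [NormedAddCommGroup H] [InnerProductSpace ℝ H]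
    (S : Set H) (x : H) : Set H :=
  {ζ | ∃ σ : ℝ, 0 < σ ∧ ∀ y ∈ S, ⟪ζ, y - x⟫ ≤ σ * ‖y - x‖ ^ 2}

/-- `S` is `r`-prox-regular: the proximal normal inequality holds with constant `1/(2r)`
for every unit proximal normal. -/
def ProxReg {H : Type*} [NormedAddCommGroup H] [InnerProductSpace ℝ H]
    (r : ℝ) (S : Set H) : Prop :=
  ∀ x ∈ S, ∀ ζ ∈ proxNC S x, ‖ζ‖ = 1 →
    ∀ y ∈ S, ⟪ζ, y - x⟫ ≤ (1 / (2 * r)) * ‖y - x‖ ^ 2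

/-- `C` is epi-Lipschitz at `x`: after a rotation sending the unit vector `d` to the
"vertical" direction, `C` coincides near `x` with the epigraph of a Lipschitz function `g`
of the orthogonal component. -/
def EpiLipschitzAt {H : Type*} [NormedAddCommGroup H] [InnerProductSpace ℝ H]
    (C : Set H) (x : H) : Prop :=
  ∃ d : H, ‖d‖ = 1 ∧ ∃ (L : NNReal) (g : H → ℝ) (ε : ℝ), 0 < ε ∧ LipschitzWith L g ∧
    ∀ y ∈ Metric.ball x ε, (y ∈ C ↔ g (y - ⟪y, d⟫ • d) ≤ ⟪y, d⟫)

/-!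
Near `C = {ψ ≤ 0}` the gradient of `ψ` is `2M`-Lipschitz, so the first-order Taylor remainder
of `ψ` is at most `M ‖y - x‖²`. From a zero `x` of `ψ`, every direction `v` with
`⟪∇ψ x, v⟫ < 0` points into `C`; hence a unit proximal normal exists only at zeros of `ψ`, where
it must be `∇ψ x / ‖∇ψ x‖`, and zeros of `ψ` are limits of points where `ψ < 0`. The Taylor
bound and `‖∇ψ x‖ > 2η` then give prox-regularity with radius `η / M`, and two nearest points of
a `y` closer than `η / M` to `C` would violate it. Near a zero `x₀` the gradient stays within `η`
of `∇ψ x₀`, so `ψ` decreases at rate `η` along `d = -∇ψ x₀ / ‖∇ψ x₀‖`: the zero of `ψ` on each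
line parallel to `d` is a Lipschitz function of the line, and `C` is locally its epigraph.
-/

open scoped NNReal

theorem isClosed_setOf_nonpos {X : Type*} [PseudoMetricSpace X] {ψ : X → ℝ} {ρ : ℝ}
    (hρ : 0 < ρ) (hψ : ∀ x ∈ thickening ρ {x | ψ x ≤ 0}, ContinuousAt ψ x) :
    IsClosed {x | ψ x ≤ 0} :=
  closure_subset_iff_isClosed.1 fun x hx =>
    (hψ x (closure_subset_thickening hρ _ hx)).continuousWithinAt.closure_le hx
      continuousWithinAt_const fun _ hy => hy

theorem isCompact_setOf_nonpos {E : Type*} [NormedAddCommGroup E] [ProperSpace E] {ψ : E → ℝ}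
    (hclosed : IsClosed {x | ψ x ≤ 0}) {R : ℝ} (hR : ∀ x, R ≤ ‖x‖ → 0 < ψ x) :
    IsCompact {x | ψ x ≤ 0} := by
  refine isCompact_of_isClosed_isBounded hclosed <|
    (isBounded_closedBall (x := 0) (r := R)).subset fun x hx => ?_
  by_contra hR'
  simp only [mem_closedBall, dist_zero_right, not_le] at hR'
  exact (hR x hR'.le).not_ge hx

theorem mem_interior_setOf_nonpos {X : Type*} [TopologicalSpace X] {ψ : X → ℝ} {x : X}
    (hψ : ContinuousAt ψ x) (hx : ψ x < 0) : x ∈ interior {x | ψ x ≤ 0} :=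
  mem_interior_iff_mem_nhds.2 <| (hψ.eventually (Iio_mem_nhds hx)).mono fun _ hy => hy.le

theorem exists_lipschitzWith_forall_nonpos_iff {P : Type*} [PseudoMetricSpace P]
    {f : P → ℝ → ℝ} {p : P} {t₀ τ δ η M : ℝ} (hτ : 0 ≤ τ) (hη : 0 < η) (hM : 0 ≤ M)
    (hMδ : M * δ ≤ η * τ) (hp : f p t₀ = 0)
    (hcont : ∀ z ∈ closedBall p δ, ContinuousOn (f z) (Icc (t₀ - τ) (t₀ + τ)))
    (hdesc : ∀ z ∈ closedBall p δ, ∀ u ∈ Icc (t₀ - τ) (t₀ + τ), ∀ v ∈ Icc (t₀ - τ) (t₀ + τ),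
      u ≤ v → f z v ≤ f z u - η * (v - u))
    (hlip : ∀ z ∈ closedBall p δ, ∀ z' ∈ closedBall p δ, ∀ u ∈ Icc (t₀ - τ) (t₀ + τ),
      f z u ≤ f z' u + M * dist z z') :
    ∃ g : P → ℝ, LipschitzWith (M / η).toNNReal g ∧
      ∀ z ∈ closedBall p δ, ∀ u ∈ Icc (t₀ - τ) (t₀ + τ), (f z u ≤ 0 ↔ g z ≤ u) := by
  set I := Icc (t₀ - τ) (t₀ + τ)
  have hlo : t₀ - τ ∈ I := ⟨le_rfl, by linarith⟩
  have hmid : t₀ ∈ I := ⟨by linarith, by linarith⟩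
  have hhi : t₀ + τ ∈ I := ⟨by linarith, le_rfl⟩
  -- `f p` drops by `η τ` on each half of `I`, and `f z` stays within `M δ ≤ η τ` of `f p`.
  have hroot : ∀ z ∈ closedBall p δ, ∃ r ∈ I, f z r = 0 := by
    intro z hz
    have hp' : p ∈ closedBall p δ := mem_closedBall_self (dist_nonneg.trans hz)
    have hdown := hdesc p hp' t₀ hmid (t₀ + τ) hhi (by linarith)
    have hup := hdesc p hp' (t₀ - τ) hlo t₀ hmid (by linarith)
    have h₁ := hlip z hz p hp' (t₀ + τ) hhi
    have h₂ := hlip p hp' z hz (t₀ - τ) hlo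
    have hzp : dist z p ≤ δ := hz
    rw [dist_comm] at h₂
    exact intermediate_value_Icc' (by linarith) (hcont z hz) ⟨by nlinarith, by nlinarith⟩
  choose! r hrI hr0 using hroot
  have hanti : ∀ z ∈ closedBall p δ, StrictAntiOn (f z) I := fun z hz u hu v hv huv => by
    nlinarith [hdesc z hz u hu v hv huv.le]
  have hrlip : ∀ z ∈ closedBall p δ, ∀ z' ∈ closedBall p δ, r z ≤ r z' + M / η * dist z z' := by
    intro z hz z' hz'
    rcases le_total (r z) (r z') with hle | hlt
    · nlinarith [div_nonneg hM hη.le, dist_nonneg (x := z) (y := z')]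
    have h₁ := hdesc z' hz' _ (hrI z' hz') _ (hrI z hz) hlt
    have h₂ := hlip z hz z' hz' _ (hrI z hz)
    rw [hr0 z' hz'] at h₁
    rw [hr0 z hz] at h₂
    rw [div_mul_eq_mul_div, ← sub_le_iff_le_add', le_div_iff₀ hη]
    linarith
  obtain ⟨g, hg, hrg⟩ := (LipschitzOnWith.of_le_add_mul' _ hrlip).extend_real
  refine ⟨g, hg, fun z hz u hu => ?_⟩
  rw [← hrg hz, ← hr0 z hz]
  exact (hanti z hz).le_iff_ge hu (hrI z hz)

section InnerProductSpace

variable {H : Type*} [NormedAddCommGroup H] [InnerProductSpace ℝ H]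

theorem norm_sub_inner_smul_le {d : H} (hd : ‖d‖ = 1) (v : H) : ‖v - ⟪v, d⟫ • d‖ ≤ ‖v‖ := by
  have h : ‖v - ⟪v, d⟫ • d‖ ^ 2 = ‖v‖ ^ 2 - ⟪v, d⟫ ^ 2 := by
    rw [norm_sub_sq_real, real_inner_smul_right, norm_smul, hd, mul_one, Real.norm_eq_abs, sq_abs]
    ring
  exact le_of_pow_le_pow_left₀ two_ne_zero (norm_nonneg _) (by nlinarith [sq_nonneg ⟪v, d⟫])

theorem abs_inner_sub_inner_le_norm {d : H} (hd : ‖d‖ = 1) (x y : H) :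
    |⟪y, d⟫ - ⟪x, d⟫| ≤ ‖y - x‖ := by
  simpa [← inner_sub_left, hd] using abs_real_inner_le_norm (y - x) d

theorem dist_add_smul_add_smul_le {d : H} (hd : ‖d‖ = 1) (z p : H) (u t : ℝ) :
    dist (z + u • d) (p + t • d) ≤ dist z p + |u - t| := by
  rw [dist_eq_norm, dist_eq_norm, show z + u • d - (p + t • d) = (z - p) + (u - t) • d by
    rw [sub_smul]; abel]
  simpa [norm_smul, hd] using norm_add_le (z - p) ((u - t) • d)

theorem inner_neg_inv_norm_smul_le {g : H} (hg : g ≠ 0) (g' : H) :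
    ⟪g', -(‖g‖⁻¹ • g)⟫ ≤ -‖g‖ + ‖g' - g‖ := by
  have hself : ⟪g, ‖g‖⁻¹ • g⟫ = ‖g‖ := by
    rw [real_inner_smul_right, real_inner_self_eq_norm_sq]
    field_simp
  have hunit : ‖‖g‖⁻¹ • g‖ = 1 := norm_smul_inv_norm hg
  have hrest := real_inner_le_norm (g' - g) (-(‖g‖⁻¹ • g))
  rw [norm_neg, hunit, mul_one, inner_sub_left, inner_neg_right, inner_neg_right, hself] at hrest
  rw [inner_neg_right]
  linarith

theorem eq_inv_norm_smul_of_forall_inner_neg {ζ g : H} (hζ : ‖ζ‖ = 1) (hg : g ≠ 0)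
    (h : ∀ v, ⟪g, v⟫ < 0 → ⟪ζ, v⟫ ≤ 0) : ζ = ‖g‖⁻¹ • g := by
  set u := ‖g‖⁻¹ • g
  have hu : ‖u‖ = 1 := norm_smul_inv_norm hg
  have hgu : g = ‖g‖ • u := by simp [u, smul_smul, norm_ne_zero_iff.2 hg]
  have hζu : 1 ≤ ⟪ζ, u⟫ := by
    by_contra! hlt
    have hneg : ⟪g, ζ - u⟫ < 0 := by
      rw [hgu, inner_smul_left, inner_sub_right, real_inner_self_eq_norm_sq, hu,
        real_inner_comm]
      exact mul_neg_of_pos_of_neg (norm_pos_iff.2 hg) (by simpa using hlt)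
    have := h _ hneg
    rw [inner_sub_right, real_inner_self_eq_norm_sq, hζ] at this
    linarith
  have : ‖ζ - u‖ ^ 2 ≤ 0 := by rw [norm_sub_sq_real, hζ, hu]; linarith
  exact sub_eq_zero.1 (norm_eq_zero.1 (by nlinarith [norm_nonneg (ζ - u)]))

theorem inner_nonpos_of_mem_proxNC {S : Set H} {x ζ v : H} (hζ : ζ ∈ proxNC S x)
    (hv : ∀ᶠ t in 𝓝[>] (0 : ℝ), x + t • v ∈ S) : ⟪ζ, v⟫ ≤ 0 := by
  obtain ⟨σ, -, hσ⟩ := hζ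
  have hlim : Tendsto (fun t : ℝ => σ * ‖v‖ ^ 2 * t) (𝓝[>] 0) (𝓝 0) :=
    ((by fun_prop : Continuous fun t : ℝ => σ * ‖v‖ ^ 2 * t).tendsto' 0 0
      (by simp)).mono_left nhdsWithin_le_nhds
  refine ge_of_tendsto hlim ?_
  filter_upwards [hv, self_mem_nhdsWithin] with t hxt (ht : 0 < t)
  have := hσ _ hxt
  rw [add_sub_cancel_left, inner_smul_right, norm_smul, Real.norm_of_nonneg ht.le] at this
  nlinarith

theorem eq_zero_of_mem_proxNC_of_mem_interior {S : Set H} {x ζ : H} (hζ : ζ ∈ proxNC S x)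
    (hx : x ∈ interior S) : ζ = 0 := by
  have hcont : Tendsto (fun t : ℝ => x + t • ζ) (𝓝[>] 0) (𝓝 x) :=
    ((by fun_prop : Continuous fun t : ℝ => x + t • ζ).tendsto' 0 x
      (by simp)).mono_left nhdsWithin_le_nhds
  exact real_inner_self_nonpos.1 <|
    inner_nonpos_of_mem_proxNC hζ (hcont.eventually (mem_interior_iff_mem_nhds.1 hx))

theorem smul_mem_proxNC {S : Set H} {x ζ : H} (hζ : ζ ∈ proxNC S x) {a : ℝ} (ha : 0 < a) :
    a • ζ ∈ proxNC S x := by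
  obtain ⟨σ, hσ, hineq⟩ := hζ
  refine ⟨a * σ, mul_pos ha hσ, fun y hy => ?_⟩
  rw [inner_smul_left, RCLike.conj_to_real, mul_assoc]
  exact mul_le_mul_of_nonneg_left (hineq y hy) ha.le

theorem sub_mem_proxNC_of_dist_eq_infDist {S : Set H} {y c : H}
    (hc : dist y c = infDist y S) : y - c ∈ proxNC S c := by
  refine ⟨1 / 2, one_half_pos, fun y' hy' => ?_⟩
  have hnear : ‖y - c‖ ≤ ‖y - y'‖ := by
    rw [← dist_eq_norm, ← dist_eq_norm, hc]
    exact infDist_le_dist_of_mem hy'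
  have hexp : ‖y - y'‖ ^ 2 = ‖y - c‖ ^ 2 - 2 * ⟪y - c, y' - c⟫ + ‖y' - c‖ ^ 2 := by
    rw [← norm_sub_sq_real]; congr 2; abel
  nlinarith [norm_nonneg (y - c)]

theorem ProxReg.inner_le {r : ℝ} {S : Set H} (h : ProxReg r S) {x ζ y : H} (hx : x ∈ S)
    (hζ : ζ ∈ proxNC S x) (hy : y ∈ S) : ⟪ζ, y - x⟫ ≤ ‖ζ‖ / (2 * r) * ‖y - x‖ ^ 2 := by
  rcases eq_or_ne ζ 0 with rfl | hζ0
  · simp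
  have hpos : 0 < ‖ζ‖ := norm_pos_iff.2 hζ0
  have hunit := h x hx _ (smul_mem_proxNC hζ (inv_pos.2 hpos)) (norm_smul_inv_norm hζ0) y hy
  rw [inner_smul_left, RCLike.conj_to_real, inv_mul_le_iff₀ hpos] at hunit
  calc ⟪ζ, y - x⟫ ≤ ‖ζ‖ * (1 / (2 * r) * ‖y - x‖ ^ 2) := hunit
    _ = ‖ζ‖ / (2 * r) * ‖y - x‖ ^ 2 := by ring

theorem ProxReg.existsUnique_dist_eq_infDist {r : ℝ} {S : Set H} (h : ProxReg r S)
    (hS : IsCompact S) (hne : S.Nonempty) {y : H} (hy : infDist y S < r) :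
    ∃! c, c ∈ S ∧ dist y c = infDist y S := by
  obtain ⟨c₀, hc₀, hd₀⟩ := hS.exists_infDist_eq_dist hne y
  refine ⟨c₀, ⟨hc₀, hd₀.symm⟩, fun c ⟨hc, hd⟩ => ?_⟩
  set t := infDist y S
  have hr : 0 < r := infDist_nonneg.trans_lt hy
  have hyc : ‖y - c‖ = t := by rw [← dist_eq_norm, hd]
  have hyc₀ : ‖y - c₀‖ = t := by rw [← dist_eq_norm, hd₀]
  have hprox := h.inner_le hc (sub_mem_proxNC_of_dist_eq_infDist hd) hc₀
  have hexp : ‖y - c₀‖ ^ 2 = ‖y - c‖ ^ 2 - 2 * ⟪y - c, c₀ - c⟫ + ‖c₀ - c‖ ^ 2 := by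
    rw [← norm_sub_sq_real]; congr 2; abel
  have hsmall : t / (2 * r) < 1 / 2 := by
    rw [div_lt_div_iff₀ (by positivity) two_pos]; linarith
  rw [hyc] at hprox
  have : ‖c₀ - c‖ ^ 2 ≤ 0 := by nlinarith [sq_nonneg ‖c₀ - c‖]
  exact (sub_eq_zero.1 (norm_eq_zero.1 (by nlinarith [norm_nonneg (c₀ - c)]))).symm

theorem epiLipschitzAt_of_mem_interior [Nontrivial H] {S : Set H} {x : H}
    (hx : x ∈ interior S) : EpiLipschitzAt S x := by
  obtain ⟨d, hd⟩ := exists_norm_eq H zero_le_one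
  obtain ⟨ε, hε, hball⟩ := Metric.isOpen_iff.1 isOpen_interior x hx
  refine ⟨d, hd, 0, fun _ => ⟪x, d⟫ - ε, ε, hε, LipschitzWith.const _, fun y hy => ?_⟩
  have hyx := abs_le.1 ((abs_inner_sub_inner_le_norm hd x y).trans (mem_ball_iff_norm.1 hy).le)
  exact iff_of_true (interior_subset (hball hy)) (by linarith [hyx.1])

theorem epiLipschitzAt_of_forall_add_smul_mem_iff {S : Set H} {x₀ d : H} (hd : ‖d‖ = 1)
    {δ τ : ℝ} (hδ : 0 < δ) (hδτ : δ ≤ τ) {g : H → ℝ} {L : ℝ≥0} (hg : LipschitzWith L g)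
    (h : ∀ z ∈ closedBall (x₀ - ⟪x₀, d⟫ • d) δ, ∀ u ∈ Icc (⟪x₀, d⟫ - τ) (⟪x₀, d⟫ + τ),
      (z + u • d ∈ S ↔ g z ≤ u)) :
    EpiLipschitzAt S x₀ := by
  refine ⟨d, hd, L, g, δ, hδ, hg, fun y hy => ?_⟩
  have hyx := mem_ball_iff_norm.1 hy
  have hz : y - ⟪y, d⟫ • d ∈ closedBall (x₀ - ⟪x₀, d⟫ • d) δ := by
    rw [mem_closedBall_iff_norm, show y - ⟪y, d⟫ • d - (x₀ - ⟪x₀, d⟫ • d) =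
      (y - x₀) - ⟪y - x₀, d⟫ • d by rw [inner_sub_left, sub_smul]; abel]
    exact (norm_sub_inner_smul_le hd _).trans hyx.le
  have ht := abs_le.1 ((abs_inner_sub_inner_le_norm hd x₀ y).trans (hyx.le.trans hδτ))
  have := h _ hz ⟪y, d⟫ ⟨by linarith [ht.1], by linarith [ht.2]⟩
  rwa [sub_add_cancel] at this

section Gradient

variable [CompleteSpace H]

theorem HasGradientAt.hasDerivAt_comp_add_smul {ψ : H → ℝ} {g x v : H} {t : ℝ}
    (h : HasGradientAt ψ g (x + t • v)) :
    HasDerivAt (fun s : ℝ => ψ (x + s • v)) ⟪g, v⟫ t := by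
  have hline : HasDerivAt (fun s : ℝ => x + s • v) v t := by
    simpa using ((hasDerivAt_id t).smul_const v).const_add x
  simpa [InnerProductSpace.toDual_apply_apply, Function.comp_def] using
    h.hasFDerivAt.comp_hasDerivAt t hline

theorem HasGradientAt.eventually_lt_add_smul {ψ : H → ℝ} {g x v : H}
    (hψ : HasGradientAt ψ g x) (hv : ⟪g, v⟫ < 0) : ∀ᶠ t in 𝓝[>] (0 : ℝ), ψ (x + t • v) < ψ x := by
  have hderiv : HasDerivAt (fun t : ℝ => ψ (x + t • v)) ⟪g, v⟫ 0 :=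
    HasGradientAt.hasDerivAt_comp_add_smul (by simpa using hψ)
  have hslope := (hasDerivAt_iff_tendsto_slope.1 hderiv).mono_left
    (nhdsWithin_mono _ fun t (ht : 0 < t) => ht.ne')
  filter_upwards [hslope.eventually (gt_mem_nhds hv), self_mem_nhdsWithin]
    with t hneg (ht : 0 < t)
  rw [slope_def_field, sub_zero, div_lt_iff₀ ht, zero_mul] at hneg
  simpa using hneg

theorem Convex.abs_sub_sub_inner_le_of_lipschitzOnWith {ψ : H → ℝ} {ψ' : H → H} {s : Set H}
    {L : ℝ≥0} (hs : Convex ℝ s) (hψ : ∀ z ∈ s, HasGradientAt ψ (ψ' z) z)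
    (hL : LipschitzOnWith L ψ' s) {x y : H} (hx : x ∈ s) (hy : y ∈ s) :
    |ψ y - ψ x - ⟪ψ' x, y - x⟫| ≤ L / 2 * ‖y - x‖ ^ 2 := by
  set v := y - x
  have hseg : ∀ t ∈ Icc (0 : ℝ) 1, x + t • v ∈ s := fun t ht => hs.add_smul_sub_mem hx hy ht
  have hf : ∀ t ∈ Icc (0 : ℝ) 1,
      HasDerivAt (fun t : ℝ => ψ (x + t • v) - ψ x - t * ⟪ψ' x, v⟫)
        ⟪ψ' (x + t • v) - ψ' x, v⟫ t := fun t ht => by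
    rw [inner_sub_left]
    exact (((hψ _ (hseg t ht)).hasDerivAt_comp_add_smul).sub_const (ψ x)).sub
      (hasDerivAt_mul_const ⟪ψ' x, v⟫)
  have hB : ∀ t, HasDerivAt (fun t : ℝ => L / 2 * ‖v‖ ^ 2 * t ^ 2) (L * ‖v‖ ^ 2 * t) t :=
    fun t => ((hasDerivAt_pow 2 t).const_mul (L / 2 * ‖v‖ ^ 2)).congr_deriv (by ring)
  have bound : ∀ t ∈ Ico (0 : ℝ) 1, ‖⟪ψ' (x + t • v) - ψ' x, v⟫‖ ≤ L * ‖v‖ ^ 2 * t := by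
    intro t ht
    have hlip := hL.norm_sub_le (hseg t (Ico_subset_Icc_self ht)) hx
    rw [add_sub_cancel_left, norm_smul, Real.norm_of_nonneg ht.1] at hlip
    calc ‖⟪ψ' (x + t • v) - ψ' x, v⟫‖ ≤ ‖ψ' (x + t • v) - ψ' x‖ * ‖v‖ :=
          norm_inner_le_norm _ _
      _ ≤ L * (t * ‖v‖) * ‖v‖ := by gcongr
      _ = L * ‖v‖ ^ 2 * t := by ring
  have := image_norm_le_of_norm_deriv_right_le_deriv_boundary
    (fun t ht => (hf t ht).continuousAt.continuousWithinAt)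
    (fun t ht => (hf t (Ico_subset_Icc_self ht)).hasDerivWithinAt) (by simp) hB bound
    (right_mem_Icc.2 zero_le_one)
  simpa [v] using this

theorem Convex.le_add_of_forall_inner_gradient_le {ψ : H → ℝ} {ψ' : H → H} {s : Set H}
    (hs : Convex ℝ s) (hψ : ∀ z ∈ s, HasGradientAt ψ (ψ' z) z) {x y : H} (hx : x ∈ s)
    (hy : y ∈ s) {c : ℝ} (hc : ∀ z ∈ s, ⟪ψ' z, y - x⟫ ≤ c) : ψ y ≤ ψ x + c := by
  obtain ⟨z, hz, hmvt⟩ :=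
    domain_mvt (fun z hz => (hψ z hz).hasFDerivAt.hasFDerivWithinAt) hs hx hy
  have := hc z (hs.segment_subset hx hy hz)
  rw [InnerProductSpace.toDual_apply_apply] at hmvt
  linarith

theorem Convex.le_sub_mul_of_inner_gradient_le {ψ : H → ℝ} {ψ' : H → H}
    {s : Set H} (hs : Convex ℝ s) (hψ : ∀ z ∈ s, HasGradientAt ψ (ψ' z) z) {d : H} {η : ℝ}
    (hd : ∀ z ∈ s, ⟪ψ' z, d⟫ ≤ -η) {x : H} {u v : ℝ} (huv : u ≤ v) (hu : x + u • d ∈ s)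
    (hv : x + v • d ∈ s) : ψ (x + v • d) ≤ ψ (x + u • d) - η * (v - u) := by
  rw [sub_eq_add_neg]
  refine hs.le_add_of_forall_inner_gradient_le hψ hu hv fun z hz => ?_
  rw [show x + v • d - (x + u • d) = (v - u) • d by rw [sub_smul]; abel, real_inner_smul_right]
  nlinarith [hd z hz]

theorem Convex.le_add_mul_norm_of_norm_gradient_le {ψ : H → ℝ} {ψ' : H → H}
    {s : Set H} (hs : Convex ℝ s) (hψ : ∀ z ∈ s, HasGradientAt ψ (ψ' z) z) {M : ℝ}
    (hM : ∀ z ∈ s, ‖ψ' z‖ ≤ M) {x y : H} (hx : x ∈ s) (hy : y ∈ s) :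
    ψ y ≤ ψ x + M * ‖y - x‖ :=
  hs.le_add_of_forall_inner_gradient_le hψ hx hy fun z hz =>
    (real_inner_le_norm _ _).trans (mul_le_mul_of_nonneg_right (hM z hz) (norm_nonneg _))

theorem eq_inv_norm_smul_of_mem_proxNC_setOf_nonpos {ψ : H → ℝ} {g x ζ : H}
    (hψ : HasGradientAt ψ g x) (hx : ψ x = 0) (hg : g ≠ 0)
    (hζ : ζ ∈ proxNC {y | ψ y ≤ 0} x) (hζ1 : ‖ζ‖ = 1) : ζ = ‖g‖⁻¹ • g :=
  eq_inv_norm_smul_of_forall_inner_neg hζ1 hg fun _ hv =>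
    inner_nonpos_of_mem_proxNC hζ <| (hψ.eventually_lt_add_smul hv).mono fun _ ht =>
      (ht.trans_eq hx).le

theorem setOf_nonpos_subset_closure_interior {ψ : H → ℝ} {ψ' : H → H}
    {U : Set H} (hU : IsOpen U) (hCU : {x | ψ x ≤ 0} ⊆ U)
    (hψ : ∀ x ∈ U, HasGradientAt ψ (ψ' x) x) (hψ' : ∀ x, ψ x = 0 → ψ' x ≠ 0) :
    {x | ψ x ≤ 0} ⊆ closure (interior {x | ψ x ≤ 0}) := by
  intro x (hx : ψ x ≤ 0)
  rcases hx.lt_or_eq with hlt | heq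
  · exact subset_closure (mem_interior_setOf_nonpos (hψ x (hCU hx)).continuousAt hlt)
  have hline : Tendsto (fun t : ℝ => x + t • -ψ' x) (𝓝[>] 0) (𝓝 x) :=
    ((by fun_prop : Continuous fun t : ℝ => x + t • -ψ' x).tendsto' 0 x
      (by simp)).mono_left nhdsWithin_le_nhds
  have hdesc := (hψ x (hCU hx)).eventually_lt_add_smul (v := -ψ' x)
    (by simpa [inner_neg_right] using pow_pos (norm_pos_iff.2 (hψ' x heq)) 2)
  refine mem_closure_of_tendsto hline ?_
  filter_upwards [hdesc, hline.eventually (hU.mem_nhds (hCU hx))] with t hneg hU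
  exact mem_interior_setOf_nonpos (hψ _ hU).continuousAt (hneg.trans_eq heq)

theorem epiLipschitzAt_setOf_nonpos {ψ : H → ℝ} {ψ' : H → H} {x₀ d : H}
    {ε η M : ℝ} (hd : ‖d‖ = 1) (hε : 0 < ε) (hη : 0 < η) (hx₀ : ψ x₀ = 0)
    (hψ : ∀ z ∈ ball x₀ ε, HasGradientAt ψ (ψ' z) z)
    (hdesc : ∀ z ∈ ball x₀ ε, ⟪ψ' z, d⟫ ≤ -η) (hM : ∀ z ∈ ball x₀ ε, ‖ψ' z‖ ≤ M) :
    EpiLipschitzAt {x | ψ x ≤ 0} x₀ := by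
  have hηM : η ≤ M := by
    have := real_inner_le_norm (ψ' x₀) (-d)
    rw [inner_neg_right, norm_neg, hd, mul_one] at this
    linarith [hdesc x₀ (mem_ball_self hε), hM x₀ (mem_ball_self hε)]
  have hM₀ : 0 < M := hη.trans_le hηM
  set τ := ε / 4 with hτ
  set δ := η * τ / M
  have hδ : 0 < δ := by positivity
  have hMδ : M * δ = η * τ := mul_div_cancel₀ _ hM₀.ne'
  have hδτ : δ ≤ τ := by
    rw [div_le_iff₀ hM₀, mul_comm]; exact mul_le_mul_of_nonneg_left hηM (by linarith)
  set t₀ := ⟪x₀, d⟫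
  set p := x₀ - t₀ • d
  have hp : p + t₀ • d = x₀ := sub_add_cancel _ _
  have hmem : ∀ z ∈ closedBall p δ, ∀ u ∈ Icc (t₀ - τ) (t₀ + τ), z + u • d ∈ ball x₀ ε := by
    intro z hz u hu
    have hu' : |u - t₀| ≤ τ := abs_sub_le_iff.2 ⟨by linarith [hu.2], by linarith [hu.1]⟩
    have hdist := dist_add_smul_add_smul_le hd z p u t₀
    rw [hp] at hdist
    exact mem_ball.2 (hdist.trans_lt (by linarith [mem_closedBall.1 hz]))
  have hconv := convex_ball x₀ ε
  have hdec := fun z hz u hu v hv (huv : u ≤ v) =>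
    hconv.le_sub_mul_of_inner_gradient_le hψ hdesc huv (hmem z hz u hu) (hmem z hz v hv)
  have hlip : ∀ z ∈ closedBall p δ, ∀ z' ∈ closedBall p δ, ∀ u ∈ Icc (t₀ - τ) (t₀ + τ),
      ψ (z + u • d) ≤ ψ (z' + u • d) + M * dist z z' := fun z hz z' hz' u hu => by
    simpa [dist_eq_norm] using
      hconv.le_add_mul_norm_of_norm_gradient_le hψ hM (hmem z' hz' u hu) (hmem z hz u hu)
  obtain ⟨g, hg, hiff⟩ := exists_lipschitzWith_forall_nonpos_iff (f := fun z u => ψ (z + u • d))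
    (by linarith) hη hM₀.le hMδ.le (by rwa [hp]) (fun z hz u hu =>
      (hψ _ (hmem z hz u hu)).hasDerivAt_comp_add_smul.continuousAt.continuousWithinAt)
    hdec hlip
  exact epiLipschitzAt_of_forall_add_smul_mem_iff hd hδ hδτ hg hiff

variable {ψ : H → ℝ} {ψ' : H → H} {ρ η M : ℝ}

theorem abs_sub_sub_inner_le_of_nonpos (hρ : 0 < ρ) (hM : 0 ≤ M)
    (hψ : ∀ x ∈ thickening ρ {x | ψ x ≤ 0}, HasGradientAt ψ (ψ' x) x)
    (hlip : LipschitzOnWith (2 * M).toNNReal ψ' (cthickening (ρ / 2) {x | ψ x ≤ 0}))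
    {x y : H} (hx : ψ x ≤ 0) (hy : ‖y - x‖ ≤ ρ / 2) :
    |ψ y - ψ x - ⟪ψ' x, y - x⟫| ≤ M * ‖y - x‖ ^ 2 := by
  have hsub : closedBall x (ρ / 2) ⊆ cthickening (ρ / 2) {x | ψ x ≤ 0} :=
    closedBall_subset_cthickening (show x ∈ {x | ψ x ≤ 0} from hx) _
  have hsub' := hsub.trans (cthickening_subset_thickening' hρ (half_lt_self hρ) _)
  have := (convex_closedBall x (ρ / 2)).abs_sub_sub_inner_le_of_lipschitzOnWith
    (fun z hz => hψ z (hsub' hz)) (hlip.mono hsub) (mem_closedBall_self (by positivity))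
    (mem_closedBall_iff_norm.2 hy)
  rwa [Real.coe_toNNReal _ (by positivity), mul_div_cancel_left₀ _ two_ne_zero] at this

theorem proxReg_setOf_nonpos (hρ : 0 < ρ) (hη : 0 < η)
    (hψ : ∀ x ∈ thickening ρ {x | ψ x ≤ 0}, HasGradientAt ψ (ψ' x) x)
    (hlip : LipschitzOnWith (2 * M).toNNReal ψ' (cthickening (ρ / 2) {x | ψ x ≤ 0}))
    (hgrad : ∀ x, ψ x = 0 → 2 * η < ‖ψ' x‖) (hM : 4 * η / ρ ≤ M) :
    ProxReg (η / M) {x | ψ x ≤ 0} := by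
  intro x (hx : ψ x ≤ 0) ζ hζ hζ1 y (hy : ψ y ≤ 0)
  have hM₀ : 0 < M := (by positivity : 0 < 4 * η / ρ).trans_le hM
  have hψx := hψ x (self_subset_thickening hρ _ hx)
  have hx₀ : ψ x = 0 := by
    by_contra hne
    have := eq_zero_of_mem_proxNC_of_mem_interior hζ
      (mem_interior_setOf_nonpos hψx.continuousAt (lt_of_le_of_ne hx hne))
    simp [this] at hζ1
  have hg := hgrad x hx₀
  have hζg := eq_inv_norm_smul_of_mem_proxNC_setOf_nonpos hψx hx₀
    (norm_pos_iff.1 (by linarith)) hζ hζ1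
  rw [show 1 / (2 * (η / M)) = M / (2 * η) by field_simp]
  rcases le_or_gt ‖y - x‖ (ρ / 2) with hnear | hfar
  · have htaylor := (abs_le.1 (abs_sub_sub_inner_le_of_nonpos hρ hM₀.le hψ hlip hx hnear)).1
    rw [hζg, real_inner_smul_left]
    calc ‖ψ' x‖⁻¹ * ⟪ψ' x, y - x⟫ ≤ ‖ψ' x‖⁻¹ * (M * ‖y - x‖ ^ 2) := by gcongr; linarith
      _ ≤ (2 * η)⁻¹ * (M * ‖y - x‖ ^ 2) := by gcongr
      _ = M / (2 * η) * ‖y - x‖ ^ 2 := by ring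
  · have hρM : 4 * η ≤ M * ρ := (div_le_iff₀ hρ).1 hM
    have hone : 1 ≤ M / (2 * η) * ‖y - x‖ := by
      rw [div_mul_eq_mul_div, le_div_iff₀ (by positivity)]
      nlinarith
    calc ⟪ζ, y - x⟫ ≤ ‖y - x‖ := (real_inner_le_norm _ _).trans_eq (by rw [hζ1, one_mul])
      _ ≤ M / (2 * η) * ‖y - x‖ ^ 2 := by nlinarith [norm_nonneg (y - x)]

theorem epiLipschitzAt_setOf_nonpos_of_eq_zero (hρ : 0 < ρ) (hη : 0 < η)
    (hψ : ∀ x ∈ thickening ρ {x | ψ x ≤ 0}, HasGradientAt ψ (ψ' x) x)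
    (hlip : LipschitzOnWith (2 * M).toNNReal ψ' (cthickening (ρ / 2) {x | ψ x ≤ 0}))
    (hgrad : ∀ x, ψ x = 0 → 2 * η < ‖ψ' x‖) (hM : 4 * η / ρ ≤ M) {x₀ : H} (hx₀ : ψ x₀ = 0) :
    EpiLipschitzAt {x | ψ x ≤ 0} x₀ := by
  have hM₀ : 0 < M := (by positivity : 0 < 4 * η / ρ).trans_le hM
  have hg := hgrad x₀ hx₀
  have hg₀ : ψ' x₀ ≠ 0 := norm_pos_iff.1 (by linarith)
  set ε := η / (2 * M)
  have hε : 0 < ε := by positivity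
  have hερ : ε ≤ ρ / 2 := by
    have := (div_le_iff₀ hρ).1 hM
    rw [div_le_div_iff₀ (by positivity) two_pos]
    nlinarith
  have hball : ball x₀ ε ⊆ cthickening (ρ / 2) {x | ψ x ≤ 0} :=
    (ball_subset_closedBall.trans (closedBall_subset_closedBall hερ)).trans
      (closedBall_subset_cthickening (show x₀ ∈ {x | ψ x ≤ 0} from hx₀.le) _)
  have hball' := hball.trans (cthickening_subset_thickening' hρ (half_lt_self hρ) _)
  have hclose : ∀ z ∈ ball x₀ ε, ‖ψ' z - ψ' x₀‖ ≤ η := fun z hz => by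
    have := hlip.norm_sub_le (hball hz) (hball (mem_ball_self hε))
    rw [Real.coe_toNNReal _ (by positivity)] at this
    calc ‖ψ' z - ψ' x₀‖ ≤ 2 * M * ‖z - x₀‖ := this
      _ ≤ 2 * M * ε := by gcongr; exact (mem_ball_iff_norm.1 hz).le
      _ = η := mul_div_cancel₀ _ (by positivity)
  refine epiLipschitzAt_setOf_nonpos (d := -(‖ψ' x₀‖⁻¹ • ψ' x₀)) (M := ‖ψ' x₀‖ + η)
    (by rw [norm_neg]; exact norm_smul_inv_norm hg₀) hε hη hx₀ (fun z hz => hψ z (hball' hz))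
    (fun z hz => ?_) (fun z hz => ?_)
  · linarith [inner_neg_inv_norm_smul_le hg₀ (ψ' z), hclose z hz]
  · linarith [norm_le_norm_add_norm_sub' (ψ' z) (ψ' x₀), hclose z hz]

end Gradient

end InnerProductSpace

theorem stmt_1_general {n : ℕ} (hn : 0 < n)
    (ψ : EuclideanSpace ℝ (Fin n) → ℝ)
    (ψ' : EuclideanSpace ℝ (Fin n) → EuclideanSpace ℝ (Fin n))
    (ρ η Mψ : ℝ) (hρ : 0 < ρ) (hη : 0 < η)
    (hne : ({x : EuclideanSpace ℝ (Fin n) | ψ x ≤ 0}).Nonempty)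
    -- (A2.1): ψ is C¹ with locally Lipschitz gradient on C + ρB
    (hψd : ∀ x ∈ Metric.thickening ρ {x : EuclideanSpace ℝ (Fin n) | ψ x ≤ 0},
      HasGradientAt ψ (ψ' x) x)
    -- (A2.2)
    (hgrad : ∀ x, ψ x = 0 → 2 * η < ‖ψ' x‖)
    -- (A2.3): coercivity
    (hcoer : ∀ Mc : ℝ, ∃ R : ℝ, ∀ x : EuclideanSpace ℝ (Fin n), R ≤ ‖x‖ → Mc ≤ ψ x)
    -- the constants M̄ψ and Mψ
    (hMψlip : LipschitzOnWith (Real.toNNReal (2 * Mψ)) ψ'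
      (Metric.cthickening (ρ / 2) {x : EuclideanSpace ℝ (Fin n) | ψ x ≤ 0}))
    (hMψ : 4 * η / ρ ≤ Mψ) :
    ({x : EuclideanSpace ℝ (Fin n) | ψ x ≤ 0}).Nonempty ∧
    IsCompact {x : EuclideanSpace ℝ (Fin n) | ψ x ≤ 0} ∧
    {x : EuclideanSpace ℝ (Fin n) | ψ x ≤ 0}
      = closure (interior {x : EuclideanSpace ℝ (Fin n) | ψ x ≤ 0}) ∧
    (∀ x ∈ {x : EuclideanSpace ℝ (Fin n) | ψ x ≤ 0},
      EpiLipschitzAt {x : EuclideanSpace ℝ (Fin n) | ψ x ≤ 0} x) ∧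
    ProxReg (η / Mψ) {x : EuclideanSpace ℝ (Fin n) | ψ x ≤ 0} ∧
    ∀ y : EuclideanSpace ℝ (Fin n),
      Metric.infDist y {x : EuclideanSpace ℝ (Fin n) | ψ x ≤ 0} < η / Mψ →
      ∃! c, c ∈ {x : EuclideanSpace ℝ (Fin n) | ψ x ≤ 0} ∧
        dist y c = Metric.infDist y {x : EuclideanSpace ℝ (Fin n) | ψ x ≤ 0} := by
  have : Nonempty (Fin n) := ⟨⟨0, hn⟩⟩
  have hclosed := isClosed_setOf_nonpos hρ fun x hx => (hψd x hx).continuousAt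
  obtain ⟨R, hR⟩ := hcoer 1
  have hcpt := isCompact_setOf_nonpos hclosed fun x hx => one_pos.trans_le (hR x hx)
  have hprox := proxReg_setOf_nonpos hρ hη hψd hMψlip hgrad hMψ
  have hψ'0 : ∀ x, ψ x = 0 → ψ' x ≠ 0 := fun x hx =>
    norm_pos_iff.1 ((mul_pos two_pos hη).trans (hgrad x hx))
  refine ⟨hne, hcpt, ?_, fun x (hx : ψ x ≤ 0) => ?_, hprox,
    fun y hy => hprox.existsUnique_dist_eq_infDist hcpt hne hy⟩
  · exact (setOf_nonpos_subset_closure_interior isOpen_thickening (self_subset_thickening hρ _)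
      hψd hψ'0).antisymm (closure_minimal interior_subset hclosed)
  rcases hx.lt_or_eq with hlt | heq
  · exact epiLipschitzAt_of_mem_interior <|
      mem_interior_setOf_nonpos (hψd x (self_subset_thickening hρ _ hx)).continuousAt hlt
  · exact epiLipschitzAt_setOf_nonpos_of_eq_zero hρ hη hψd hMψlip hgrad hMψ heq

/-- Under (A2.1)–(A2.3), `C = {ψ ≤ 0}` is nonempty and compact,
`C = cl (int C)`, `C` is epi-Lipschitz, and `C` is `(η/Mψ)`-prox-regular; in particular every
point at distance `< η/Mψ` from `C` has a unique nearest point in `C`. -/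
theorem stmt_1 {n : ℕ} (hn : 0 < n)
    (ψ : EuclideanSpace ℝ (Fin n) → ℝ)
    (ψ' : EuclideanSpace ℝ (Fin n) → EuclideanSpace ℝ (Fin n))
    (ρ η Mψbar Mψ : ℝ) (hρ : 0 < ρ) (hη : 0 < η)
    (hne : ({x : EuclideanSpace ℝ (Fin n) | ψ x ≤ 0}).Nonempty)
    -- (A2.1): ψ is C¹ with locally Lipschitz gradient on C + ρB
    (hψd : ∀ x ∈ Metric.thickening ρ {x : EuclideanSpace ℝ (Fin n) | ψ x ≤ 0},
      HasGradientAt ψ (ψ' x) x)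
    (hψc : ContinuousOn ψ' (Metric.thickening ρ {x : EuclideanSpace ℝ (Fin n) | ψ x ≤ 0}))
    (hψloclip : ∀ x ∈ Metric.thickening ρ {x : EuclideanSpace ℝ (Fin n) | ψ x ≤ 0},
      ∃ K : NNReal, ∃ s ∈ nhdsWithin x (Metric.thickening ρ {x : EuclideanSpace ℝ (Fin n) | ψ x ≤ 0}),
        LipschitzOnWith K ψ' s)
    -- (A2.2)
    (hgrad : ∀ x, ψ x = 0 → 2 * η < ‖ψ' x‖)
    -- (A2.3): coercivity
    (hcoer : ∀ Mc : ℝ, ∃ R : ℝ, ∀ x : EuclideanSpace ℝ (Fin n), R ≤ ‖x‖ → Mc ≤ ψ x)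
    -- the constants M̄ψ and Mψ
    (hMψbar : ∀ x, ψ x ≤ 0 → ‖ψ' x‖ ≤ Mψbar)
    (hMψlip : LipschitzOnWith (Real.toNNReal (2 * Mψ)) ψ'
      (Metric.cthickening (ρ / 2) {x : EuclideanSpace ℝ (Fin n) | ψ x ≤ 0}))
    (hMψ : 4 * η / ρ ≤ Mψ) :
    ({x : EuclideanSpace ℝ (Fin n) | ψ x ≤ 0}).Nonempty ∧
    IsCompact {x : EuclideanSpace ℝ (Fin n) | ψ x ≤ 0} ∧
    {x : EuclideanSpace ℝ (Fin n) | ψ x ≤ 0}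
      = closure (interior {x : EuclideanSpace ℝ (Fin n) | ψ x ≤ 0}) ∧
    (∀ x ∈ {x : EuclideanSpace ℝ (Fin n) | ψ x ≤ 0},
      EpiLipschitzAt {x : EuclideanSpace ℝ (Fin n) | ψ x ≤ 0} x) ∧
    ProxReg (η / Mψ) {x : EuclideanSpace ℝ (Fin n) | ψ x ≤ 0} ∧
    ∀ y : EuclideanSpace ℝ (Fin n),
      Metric.infDist y {x : EuclideanSpace ℝ (Fin n) | ψ x ≤ 0} < η / Mψ →
      ∃! c, c ∈ {x : EuclideanSpace ℝ (Fin n) | ψ x ≤ 0} ∧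
        dist y c = Metric.infDist y {x : EuclideanSpace ℝ (Fin n) | ψ x ≤ 0} :=
  stmt_1_general hn ψ ψ' ρ η Mψ hρ hη hne hψd hgrad hcoer hMψlip hMψ
end
end

section
/- Under (A2.1)–(A2.3), there exist r₀ > 0 and k̄ ∈ ℕ such that for all k ≥ k̄ and all c ∈ bdry C: [C ∩ B̄_{r₀}(c)] − ρ_k·∇ψ(c)/‖∇ψ(c)‖ ⊂ int C(k). -/
open MeasureTheory Filter Set Metric Topology
open scoped RealInnerProductSpace

noncomputable section

/-- Under (A2.1)–(A2.3), there exist `r₀ > 0` and `k̄ ∈ ℕ` such that for all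
`k ≥ k̄` and all `c ∈ bdry C`, the translate of `C ∩ B̄_{r₀}(c)` by `-ρ_k ∇ψ(c)/‖∇ψ(c)‖`
is contained in `int C(k)`. -/
theorem stmt_5 {n : ℕ}
    (ψ : EuclideanSpace ℝ (Fin n) → ℝ)
    (ψ' : EuclideanSpace ℝ (Fin n) → EuclideanSpace ℝ (Fin n))
    (ρ η : ℝ) (hρ : 0 < ρ) (hη : 0 < η)
    -- (A2.1)
    (hψd : ∀ x ∈ Metric.thickening ρ {x : EuclideanSpace ℝ (Fin n) | ψ x ≤ 0},
      HasGradientAt ψ (ψ' x) x)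
    (hψc : ContinuousOn ψ' (Metric.thickening ρ {x : EuclideanSpace ℝ (Fin n) | ψ x ≤ 0}))
    (hψloclip : ∀ x ∈ Metric.thickening ρ {x : EuclideanSpace ℝ (Fin n) | ψ x ≤ 0},
      ∃ K : NNReal, ∃ s ∈ nhdsWithin x (Metric.thickening ρ {x : EuclideanSpace ℝ (Fin n) | ψ x ≤ 0}),
        LipschitzOnWith K ψ' s)
    -- (A2.2)
    (hgrad : ∀ x, ψ x = 0 → 2 * η < ‖ψ' x‖)
    -- (A2.3)
    (hcoer : ∀ Mc : ℝ, ∃ R : ℝ, ∀ x : EuclideanSpace ℝ (Fin n), R ≤ ‖x‖ → Mc ≤ ψ x)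
    -- the sequence γ_k and the constant M̄
    (Mb : ℝ) (hMb : 0 < Mb)
    (γ : ℕ → ℝ) (hγlb : ∀ k, 2 * Mb / η < γ k) (hγtop : Tendsto γ atTop atTop)
    -- α_k, ρ_k and C(k)
    (α ρk : ℕ → ℝ) (hα : ∀ k, α k = Real.log (η * γ k / (2 * Mb)) / γ k)
    (hρk : ∀ k, ρk k = α k / η)
    (Ck : ℕ → Set (EuclideanSpace ℝ (Fin n)))
    (hCk : ∀ k, Ck k = {x : EuclideanSpace ℝ (Fin n) | ψ x ≤ 0 ∧ ψ x ≤ -α k}) :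
    ∃ r₀ : ℝ, 0 < r₀ ∧ ∃ kbar : ℕ, ∀ k ≥ kbar,
      ∀ c ∈ frontier {x : EuclideanSpace ℝ (Fin n) | ψ x ≤ 0},
        ∀ y ∈ {x : EuclideanSpace ℝ (Fin n) | ψ x ≤ 0} ∩ Metric.closedBall c r₀,
          y - ρk k • (‖ψ' c‖⁻¹ • ψ' c) ∈ interior (Ck k) := by
  set C : Set (EuclideanSpace ℝ (Fin n)) := {x | ψ x ≤ 0} with hCdef
  set T := Metric.thickening ρ C with hTdef
  by_cases hCne : C.Nonempty
  swap
  · exact ⟨1, one_pos, 0, fun k _ c _ y hy => absurd ⟨y, hy.1⟩ hCne⟩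
  have hCT : C ⊆ T := Metric.self_subset_thickening hρ C
  have hψcont : ∀ x ∈ T, ContinuousAt ψ x := fun x hx =>
    (hψd x hx).hasFDerivAt.continuousAt
  -- C is closed
  have hCclosed : IsClosed C := by
    rw [← closure_subset_iff_isClosed]
    intro x hx
    have hxT : x ∈ T := Metric.closure_subset_thickening hρ C hx
    have hne : (𝓝[C] x).NeBot := mem_closure_iff_nhdsWithin_neBot.1 hx
    have ht : Tendsto ψ (𝓝[C] x) (𝓝 (ψ x)) :=
      ((hψcont x hxT).continuousWithinAt).tendsto
    exact le_of_tendsto ht (eventually_nhdsWithin_of_forall fun z hz => hz)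
  -- C is bounded
  have hCbdd : Bornology.IsBounded C := by
    obtain ⟨R, hR⟩ := hcoer 1
    refine (Metric.isBounded_ball (x := (0 : EuclideanSpace ℝ (Fin n))) (r := R)).subset ?_
    intro x hx
    rw [Metric.mem_ball, dist_zero_right]
    by_contra h
    have := hR x (le_of_not_gt h)
    have hx0 : ψ x ≤ 0 := hx
    linarith
  -- compact set K
  set K := Metric.cthickening (ρ/2) C with hKdef
  have hKT : K ⊆ T :=
    Metric.cthickening_subset_thickening' hρ (half_lt_self hρ) C
  have hKcompact : IsCompact K :=
    Metric.isCompact_of_isClosed_isBounded Metric.isClosed_cthickening hCbdd.cthickening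
  have hCK : C ⊆ K := Metric.self_subset_cthickening C
  -- uniform continuity of ψ' on K
  obtain ⟨δ₀, hδ₀, hδ⟩ := Metric.uniformContinuousOn_iff.1
    (hKcompact.uniformContinuousOn_of_continuous (hψc.mono hKT)) (η/2) (by positivity)
  set r₀ := min (ρ/4) (δ₀/4) with hr₀def
  have hr₀ : 0 < r₀ := lt_min (by positivity) (by positivity)
  have hr₀ρ : r₀ ≤ ρ/4 := min_le_left _ _
  have hr₀δ : r₀ ≤ δ₀/4 := min_le_right _ _
  -- choose kbar
  set c₀ := η / (2 * Mb) with hc₀def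
  have hc₀ : 0 < c₀ := by positivity
  set B := max 1 ((2 * Real.sqrt c₀ / (η * r₀))^2) with hBdef
  obtain ⟨kbar, hkbar⟩ := (hγtop.eventually_ge_atTop B).exists_forall_of_atTop
  refine ⟨r₀, hr₀, kbar, fun k hk c hc y hy => ?_⟩
  have hγpos : 0 < γ k := lt_trans (by positivity) (hγlb k)
  have hγB : B ≤ γ k := hkbar k hk
  have hγ1 : (1:ℝ) ≤ γ k := le_trans (le_max_left _ _) hγB
  -- positivity of α k
  have hratio : η * γ k / (2 * Mb) = c₀ * γ k := by
    rw [hc₀def]; ring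
  have hαpos : 0 < α k := by
    rw [hα k]
    apply div_pos _ hγpos
    apply Real.log_pos
    rw [hratio]
    have h1 : 2 * Mb / η < γ k := hγlb k
    rw [div_lt_iff₀ hη] at h1
    rw [hc₀def]
    rw [div_mul_eq_mul_div, lt_div_iff₀ (by positivity)]
    nlinarith
  -- bound α k ≤ η * r₀
  have hαle : α k ≤ η * r₀ := by
    rw [hα k, hratio, div_le_iff₀ hγpos]
    have hsγ : 0 < Real.sqrt (γ k) := Real.sqrt_pos.2 hγpos
    have hlog : Real.log (c₀ * γ k) ≤ 2 * Real.sqrt (c₀ * γ k) := by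
      have h1 := Real.log_le_sub_one_of_pos (Real.sqrt_pos.2 (by positivity : 0 < c₀ * γ k))
      have h2 := Real.log_sqrt (by positivity : (0:ℝ) ≤ c₀ * γ k)
      linarith
    have hsqrtmul : Real.sqrt (c₀ * γ k) = Real.sqrt c₀ * Real.sqrt (γ k) :=
      Real.sqrt_mul hc₀.le _
    have hγeq : γ k = Real.sqrt (γ k) * Real.sqrt (γ k) := (Real.mul_self_sqrt hγpos.le).symm
    have hsB : 2 * Real.sqrt c₀ / (η * r₀) ≤ Real.sqrt (γ k) := by
      have h1 : (2 * Real.sqrt c₀ / (η * r₀))^2 ≤ γ k :=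
        le_trans (le_max_right _ _) hγB
      have h2 : 2 * Real.sqrt c₀ / (η * r₀) = Real.sqrt ((2 * Real.sqrt c₀ / (η * r₀))^2) :=
        (Real.sqrt_sq (by positivity)).symm
      rw [h2]
      exact Real.sqrt_le_sqrt h1
    have hkey : 2 * Real.sqrt c₀ ≤ η * r₀ * Real.sqrt (γ k) := by
      rw [div_le_iff₀ (by positivity)] at hsB
      linarith
    calc Real.log (c₀ * γ k) ≤ 2 * Real.sqrt c₀ * Real.sqrt (γ k) := by
          rw [hsqrtmul] at hlog; linarith
      _ ≤ η * r₀ * Real.sqrt (γ k) * Real.sqrt (γ k) := by nlinarith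
      _ = η * r₀ * γ k := by
          have hms : Real.sqrt (γ k) * Real.sqrt (γ k) = γ k := Real.mul_self_sqrt hγpos.le
          linear_combination (η * r₀) * hms
  have hρkpos : 0 < ρk k := by rw [hρk k]; positivity
  have hρkle : ρk k ≤ r₀ := by
    rw [hρk k, div_le_iff₀ hη]
    linarith [hαle]
  have hηρk : η * ρk k = α k := by
    rw [hρk k]; field_simp
  -- facts about c
  have hcC : c ∈ C := hCclosed.frontier_subset hc
  have hcT : c ∈ T := hCT hcC
  have hcK : c ∈ K := hCK hcC
  have hψc0 : ψ c = 0 := by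
    refine le_antisymm hcC ?_
    by_contra h
    push_neg at h
    have hmem : C ∈ 𝓝 c := by
      filter_upwards [(hψcont c hcT) (Iio_mem_nhds h)] with x hx
      exact (show ψ x < 0 from hx).le
    have : c ∈ interior C := mem_interior_iff_mem_nhds.2 hmem
    rw [frontier, mem_diff] at hc
    exact hc.2 this
  have hnormc : 2 * η < ‖ψ' c‖ := hgrad c hψc0
  have hψ'c0 : ψ' c ≠ 0 := by
    intro h; rw [h, norm_zero] at hnormc; linarith
  set u : EuclideanSpace ℝ (Fin n) := ‖ψ' c‖⁻¹ • ψ' c with hudef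
  have hu : ‖u‖ = 1 := by
    rw [hudef, norm_smul, norm_inv, norm_norm, inv_mul_cancel₀ (norm_ne_zero_iff.2 hψ'c0)]
  obtain ⟨hyC, hyball⟩ := hy
  have hyC' : ψ y ≤ 0 := hyC
  have hdyc : dist y c ≤ r₀ := Metric.mem_closedBall.1 hyball
  -- curve point memberships
  have hcurvemem : ∀ t : ℝ, t ∈ Icc (0:ℝ) (ρk k) →
      (y - t • u ∈ T ∧ y - t • u ∈ K ∧ dist (y - t • u) c < δ₀) := by
    intro t ht
    have hdist : dist (y - t • u) y = t := by
      rw [dist_eq_norm]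
      have : y - t • u - y = -(t • u) := by abel
      rw [this, norm_neg, norm_smul, hu, mul_one, Real.norm_eq_abs, abs_of_nonneg ht.1]
    have hdρ : dist (y - t • u) y ≤ r₀ := by rw [hdist]; exact le_trans ht.2 hρkle
    refine ⟨?_, ?_, ?_⟩
    · rw [hTdef, Metric.mem_thickening_iff]
      exact ⟨y, hyC, by linarith [hdρ, hr₀ρ]⟩
    · exact Metric.mem_cthickening_of_dist_le _ y _ C hyC (by linarith [hdρ, hr₀ρ])
    · calc dist (y - t • u) c ≤ dist (y - t • u) y + dist y c := dist_triangle _ _ _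
        _ ≤ r₀ + r₀ := add_le_add hdρ hdyc
        _ < δ₀ := by linarith [hr₀δ, hδ₀]
  -- inner product lower bound
  have hinner : ∀ t : ℝ, t ∈ Icc (0:ℝ) (ρk k) →
      3/2 * η ≤ ⟪ψ' (y - t • u), u⟫ := by
    intro t ht
    obtain ⟨_, hK', hdist⟩ := hcurvemem t ht
    have hclose : dist (ψ' (y - t • u)) (ψ' c) < η / 2 := hδ _ hK' _ hcK hdist
    have h1 : ⟪ψ' c, u⟫ = ‖ψ' c‖ := by
      rw [hudef, real_inner_smul_right, real_inner_self_eq_norm_sq]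
      field_simp [norm_ne_zero_iff.2 hψ'c0]
    have h2 : |⟪ψ' (y - t • u) - ψ' c, u⟫| ≤ ‖ψ' (y - t • u) - ψ' c‖ := by
      calc |⟪ψ' (y - t • u) - ψ' c, u⟫| ≤ ‖ψ' (y - t • u) - ψ' c‖ * ‖u‖ :=
            abs_real_inner_le_norm _ _
        _ = ‖ψ' (y - t • u) - ψ' c‖ := by rw [hu, mul_one]
    have h3 : ‖ψ' (y - t • u) - ψ' c‖ < η / 2 := by
      rw [← dist_eq_norm]; exact hclose
    have h4 : ⟪ψ' (y - t • u), u⟫ = ⟪ψ' c, u⟫ + ⟪ψ' (y - t • u) - ψ' c, u⟫ := by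
      rw [inner_sub_left]; ring
    have h5 : -(η/2) ≤ ⟪ψ' (y - t • u) - ψ' c, u⟫ := by
      have := abs_le.1 (le_of_lt (lt_of_le_of_lt h2 h3))
      exact this.1
    rw [h4, h1]
    linarith
  -- derivative of g
  have hcurve : ∀ t : ℝ, HasDerivAt (fun s : ℝ => y - s • u) (-u) t := by
    intro t
    have h1 : HasDerivAt (fun s : ℝ => s • u) ((1:ℝ) • u) t :=
      (hasDerivAt_id t).smul_const u
    simpa using h1.const_sub y
  have hgderiv : ∀ t : ℝ, t ∈ Icc (0:ℝ) (ρk k) →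
      HasDerivAt (fun s : ℝ => ψ (y - s • u)) (-⟪ψ' (y - t • u), u⟫) t := by
    intro t ht
    obtain ⟨hT', _, _⟩ := hcurvemem t ht
    have h1 := (hψd _ hT').hasFDerivAt.comp_hasDerivAt t (hcurve t)
    have h2 : (InnerProductSpace.toDual ℝ (EuclideanSpace ℝ (Fin n)) (ψ' (y - t • u))) (-u)
        = -⟪ψ' (y - t • u), u⟫ := by
      rw [InnerProductSpace.toDual_apply_apply, inner_neg_right]
    rw [h2] at h1
    exact h1
  -- mean value theorem
  obtain ⟨ξ, hξ, hslope⟩ := exists_hasDerivAt_eq_slope (fun s : ℝ => ψ (y - s • u))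
    (fun t => -⟪ψ' (y - t • u), u⟫) hρkpos
    (fun t ht => ((hgderiv t ht).continuousAt).continuousWithinAt)
    (fun t ht => hgderiv t (Ioo_subset_Icc_self ht))
  have hξIcc : ξ ∈ Icc (0:ℝ) (ρk k) := Ioo_subset_Icc_self hξ
  have hg0 : ψ (y - (0:ℝ) • u) = ψ y := by simp
  have hbound : -⟪ψ' (y - ξ • u), u⟫ ≤ -(3/2 * η) := neg_le_neg (hinner ξ hξIcc)
  set z := y - ρk k • u with hzdef
  have hψz : ψ z ≤ -(3/2 * α k) := by
    have h1 : (ψ z - ψ (y - (0:ℝ) • u)) / (ρk k - 0) ≤ -(3/2 * η) := by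
      rw [← hslope]; exact hbound
    rw [hg0, sub_zero, div_le_iff₀ hρkpos] at h1
    have h2 : ψ z ≤ ψ y - 3/2 * η * ρk k := by linarith
    have hηα : η * ρk k = α k := hηρk
    have h3 : 3/2 * η * ρk k = 3/2 * α k := by linarith [hηα]
    linarith
  have hψzlt : ψ z < -α k := by linarith
  -- interior membership
  have hzT : z ∈ T := (hcurvemem (ρk k) ⟨hρkpos.le, le_refl _⟩).1
  rw [mem_interior_iff_mem_nhds, hCk k]
  filter_upwards [(hψcont z hzT) (Iio_mem_nhds hψzlt)] with x hx
  have hx' : ψ x < -α k := hx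
  exact ⟨by linarith, hx'.le⟩
end
end

section
/- Under (A2.1)–(A2.3), for every c ∈ int C there exist k̂_c ∈ ℕ and r̂_c > 0 such that B̄_{r̂_c}(c) ⊂ int C(k̂_c) ⊂ int C(k) for all k ≥ k̂_c. -/
open MeasureTheory Filter Set Metric Topology
open scoped RealInnerProductSpace

noncomputable section

/-- Under (A2.1)–(A2.3), for every `c ∈ int C` there are `k̂_c ∈ ℕ` and
`r̂_c > 0` with `B̄_{r̂_c}(c) ⊆ int C(k̂_c) ⊆ int C(k)` for all `k ≥ k̂_c`. -/
theorem stmt_6 {n : ℕ}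
    (ψ : EuclideanSpace ℝ (Fin n) → ℝ)
    (ψ' : EuclideanSpace ℝ (Fin n) → EuclideanSpace ℝ (Fin n))
    (ρ η : ℝ) (hρ : 0 < ρ) (hη : 0 < η)
    -- (A2.1)
    (hψd : ∀ x ∈ Metric.thickening ρ {x : EuclideanSpace ℝ (Fin n) | ψ x ≤ 0},
      HasGradientAt ψ (ψ' x) x)
    (hψc : ContinuousOn ψ' (Metric.thickening ρ {x : EuclideanSpace ℝ (Fin n) | ψ x ≤ 0}))
    (hψloclip : ∀ x ∈ Metric.thickening ρ {x : EuclideanSpace ℝ (Fin n) | ψ x ≤ 0},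
      ∃ K : NNReal, ∃ s ∈ nhdsWithin x (Metric.thickening ρ {x : EuclideanSpace ℝ (Fin n) | ψ x ≤ 0}),
        LipschitzOnWith K ψ' s)
    -- (A2.2)
    (hgrad : ∀ x, ψ x = 0 → 2 * η < ‖ψ' x‖)
    -- (A2.3)
    (hcoer : ∀ Mc : ℝ, ∃ R : ℝ, ∀ x : EuclideanSpace ℝ (Fin n), R ≤ ‖x‖ → Mc ≤ ψ x)
    -- the sequence γ_k and the constant M̄
    (Mb : ℝ) (hMb : 0 < Mb)
    (γ : ℕ → ℝ) (hγlb : ∀ k, 2 * Mb / η < γ k) (hγtop : Tendsto γ atTop atTop)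
    -- α_k and C(k)
    (α : ℕ → ℝ) (hα : ∀ k, α k = Real.log (η * γ k / (2 * Mb)) / γ k)
    (Ck : ℕ → Set (EuclideanSpace ℝ (Fin n)))
    (hCk : ∀ k, Ck k = {x : EuclideanSpace ℝ (Fin n) | ψ x ≤ 0 ∧ ψ x ≤ -α k}) :
    ∀ c ∈ interior {x : EuclideanSpace ℝ (Fin n) | ψ x ≤ 0},
      ∃ (khat : ℕ) (rhat : ℝ), 0 < rhat ∧
        Metric.closedBall c rhat ⊆ interior (Ck khat) ∧
        ∀ k ≥ khat, interior (Ck khat) ⊆ interior (Ck k) := by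
  intro c hc
  set C : Set (EuclideanSpace ℝ (Fin n)) := {x | ψ x ≤ 0} with hCdef
  set U : Set (EuclideanSpace ℝ (Fin n)) := Metric.thickening ρ C with hUdef
  have hUopen : IsOpen U := Metric.isOpen_thickening
  have hCU : C ⊆ U := Metric.self_subset_thickening hρ C
  have hψcont : ContinuousOn ψ U := fun x hx =>
    ((hψd x hx).hasFDerivAt.continuousAt).continuousWithinAt
  -- positivity of γ and α
  have hγpos : ∀ k, 0 < γ k := fun k => lt_trans (by positivity) (hγlb k)
  have hαpos : ∀ k, 0 < α k := by
    intro k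
    rw [hα k]
    apply div_pos _ (hγpos k)
    apply Real.log_pos
    rw [lt_div_iff₀ (by positivity), one_mul]
    have := (div_lt_iff₀ hη).mp (hγlb k)
    linarith
  -- α → 0
  have hαtend : Tendsto α atTop (𝓝 0) := by
    have h1 : Tendsto (fun k => Real.log (η / (2 * Mb)) / γ k) atTop (𝓝 0) :=
      tendsto_const_nhds.div_atTop hγtop
    have h2 : Tendsto (fun k => Real.log (γ k) / γ k) atTop (𝓝 0) :=
      (Real.isLittleO_log_id_atTop.tendsto_div_nhds_zero).comp hγtop
    have := h1.add h2
    rw [add_zero] at this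
    refine this.congr fun k => ?_
    rw [hα k, show η * γ k / (2 * Mb) = (η / (2 * Mb)) * γ k by ring,
      Real.log_mul (by positivity) (ne_of_gt (hγpos k)), add_div]
  -- ψ c < 0
  have hcmem : c ∈ C := interior_subset hc
  have hcC : ψ c ≤ 0 := hcmem
  have hψcneg : ψ c < 0 := by
    rcases lt_or_eq_of_le hcC with h | h
    · exact h
    -- ψ c = 0 leads to contradiction
    exfalso
    have hc0 : ψ c = 0 := h
    set v := ψ' c with hv
    have hvnorm : 2 * η < ‖v‖ := hgrad c hc0
    have hvpos : 0 < ‖v‖ := lt_trans (by positivity) hvnorm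
    have hcU : c ∈ U := hCU hcmem
    have hF : HasFDerivAt ψ (InnerProductSpace.toDual ℝ _ v) c := (hψd c hcU).hasFDerivAt
    -- the function t ↦ ψ (c + t • v)
    have hline : HasDerivAt (fun t : ℝ => c + t • v) v 0 := by
      simpa using ((hasDerivAt_id (0:ℝ)).smul_const v).const_add c
    have hcomp : HasDerivAt (fun t : ℝ => ψ (c + t • v)) (‖v‖ ^ 2) 0 := by
      have hF' : HasFDerivAt ψ (InnerProductSpace.toDual ℝ _ v) ((fun t : ℝ => c + t • v) 0) := by
        simpa using hF
      have h2 := hF'.comp_hasDerivAt 0 hline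
      have hval : (InnerProductSpace.toDual ℝ (EuclideanSpace ℝ (Fin n))) v v = ‖v‖ ^ 2 := by
        rw [InnerProductSpace.toDual_apply_apply, real_inner_self_eq_norm_sq]
      rw [hval] at h2
      exact h2
    -- ball around c inside C
    obtain ⟨δ, hδpos, hδball⟩ := Metric.mem_nhds_iff.mp (mem_interior_iff_mem_nhds.mp hc)
    have hm : (0:ℝ) < ‖v‖ ^ 2 := by positivity
    have hslope : Tendsto (slope (fun t : ℝ => ψ (c + t • v)) 0) (𝓝[≠] 0) (𝓝 (‖v‖ ^ 2)) :=
      hasDerivAt_iff_tendsto_slope.mp hcomp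
    have hle : (𝓝[>] (0:ℝ)) ≤ 𝓝[≠] 0 :=
      nhdsWithin_mono 0 (fun t ht => ne_of_gt ht)
    have hev1 : ∀ᶠ t in 𝓝[>] (0:ℝ), 0 < slope (fun t : ℝ => ψ (c + t • v)) 0 t :=
      (hslope.mono_left hle).eventually (eventually_gt_nhds hm)
    have hev2 : ∀ᶠ t in 𝓝[>] (0:ℝ), t < δ / ‖v‖ := by
      have : Ioo (0:ℝ) (δ / ‖v‖) ∈ 𝓝[>] (0:ℝ) :=
        Ioo_mem_nhdsGT_of_mem ⟨le_refl 0, by positivity⟩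
      exact Filter.eventually_of_mem this fun t ht => ht.2
    have hev3 : ∀ᶠ t in 𝓝[>] (0:ℝ), 0 < t := eventually_mem_nhdsWithin
    obtain ⟨t, hts, htδ, htpos⟩ := (hev1.and (hev2.and hev3)).exists
    obtain ⟨htδ, htpos⟩ := htδ, htpos
    -- slope positivity gives ψ (c + t • v) > 0
    have hslope_eq : slope (fun t : ℝ => ψ (c + t • v)) 0 t = ψ (c + t • v) / t := by
      rw [slope_def_field]; simp [hc0]
    rw [hslope_eq] at hts
    have hψpos : 0 < ψ (c + t • v) := by
      by_contra hcon
      push_neg at hcon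
      have := div_nonpos_of_nonpos_of_nonneg hcon (le_of_lt htpos)
      linarith
    -- but c + t • v ∈ ball c δ ⊆ C
    have hmem : c + t • v ∈ Metric.ball c δ := by
      rw [Metric.mem_ball, dist_eq_norm]
      simp only [add_sub_cancel_left, norm_smul, Real.norm_eq_abs, abs_of_pos htpos]
      calc t * ‖v‖ < (δ / ‖v‖) * ‖v‖ := by
            exact mul_lt_mul_of_pos_right htδ hvpos
        _ = δ := div_mul_cancel₀ δ (ne_of_gt hvpos)
    have := hδball hmem
    simp only [hCdef, mem_setOf_eq] at this
    linarith
  -- choose khat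
  set ε := -ψ c with hε
  have hεpos : 0 < ε := by simp [hε]; linarith
  obtain ⟨N, hN⟩ := Filter.eventually_atTop.mp (hαtend.eventually (eventually_lt_nhds hεpos))
  obtain ⟨M0, hM0⟩ := Filter.eventually_atTop.mp (hαtend.eventually (eventually_lt_nhds (hαpos N)))
  set M := max N M0 with hM
  have hNM : N ≤ M := le_max_left _ _
  obtain ⟨khat, hkmem, hkmax⟩ := Finset.exists_max_image (Finset.Icc N M) α
    ⟨N, Finset.mem_Icc.mpr ⟨le_refl N, hNM⟩⟩
  have hkN : N ≤ khat := (Finset.mem_Icc.mp hkmem).1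
  have hkM : khat ≤ M := (Finset.mem_Icc.mp hkmem).2
  have hmax : ∀ k ≥ khat, α k ≤ α khat := by
    intro k hk
    by_cases hkM' : k ≤ M
    · exact hkmax k (Finset.mem_Icc.mpr ⟨le_trans hkN hk, hkM'⟩)
    · push_neg at hkM'
      have h1 : α k < α N := hM0 k (le_trans (le_max_right N M0) (le_of_lt hkM'))
      have h2 : α N ≤ α khat := hkmax N (Finset.mem_Icc.mpr ⟨le_refl N, hNM⟩)
      linarith
  have hkε : α khat < ε := hN khat hkN
  -- open set V
  set V : Set (EuclideanSpace ℝ (Fin n)) := U ∩ ψ ⁻¹' (Iio (-α khat)) with hV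
  have hVopen : IsOpen V := hψcont.isOpen_inter_preimage hUopen isOpen_Iio
  have hVsub : V ⊆ Ck khat := by
    intro x hx
    have hxψ : ψ x < -α khat := hx.2
    rw [hCk khat]
    exact ⟨le_of_lt (lt_of_lt_of_le hxψ (by linarith [hαpos khat])), le_of_lt hxψ⟩
  have hVint : V ⊆ interior (Ck khat) := interior_maximal hVsub hVopen
  have hcV : c ∈ V := ⟨hCU hcmem, by simp only [mem_preimage, mem_Iio]; linarith⟩
  obtain ⟨r, hrpos, hrball⟩ := Metric.isOpen_iff.mp hVopen c hcV
  refine ⟨khat, r / 2, by positivity, ?_, ?_⟩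
  · exact subset_trans (Metric.closedBall_subset_ball (by linarith)) (subset_trans hrball hVint)
  · intro k hk
    apply interior_mono
    rw [hCk khat, hCk k]
    intro x hx
    exact ⟨hx.1, le_trans hx.2 (by linarith [hmax k hk])⟩
end
end
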